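/- Let g > 0, T > 0, let f : ℝ → ℝ be C¹ and T-periodic, let t̂₀ satisfy f'(t̂₀) = T·g/2, and let m be a positive integer. Define tₙ = t̂₀ + T·(n·m + n·(n−1)) and vₙ = T·g·(m + 2n)/2 for all n ≥ 0. Then tₙ₊₁ − tₙ = T·(m + 2n), vₙ₊₁ = vₙ + T·g, for every n the single-ball bounce equations hold: f(tₙ) + vₙ·(tₙ₊₁ − tₙ) − (g/2)·(tₙ₊₁ − tₙ)² = f(tₙ₊₁) and vₙ₊₁ = g·(tₙ₊₁ − tₙ) − vₙ + 2f'(tₙ₊₁), and vₙ → ∞ as n → ∞. -/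
import Mathlib


open Filter Topology

/-- The accelerating trajectory `γ₂` from the proof of Theorem 3,2: if
`f'(t̂₀) = T·g/2` (the defining property of the class `𝒞` with `K = 1`) and `m`
is a positive integer, then the sequence of collision times
`tₙ = t̂₀ + T·(n·m + n·(n−1))` with post-collision velocities
`vₙ = T·g·(m + 2n)/2` satisfies `tₙ₊₁ − tₙ = T·(m + 2n)`, `vₙ₊₁ = vₙ + T·g`,
the single-ball bounce equations, and `vₙ → ∞`. -/
theorem accelerating_bouncing_trajectory
    (g T : ℝ) (hg : 0 < g) (hT : 0 < T)
    (f : ℝ → ℝ) (hf : ContDiff ℝ 1 f) (hfper : Function.Periodic f T)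
    (th : ℝ) (hth : deriv f th = T * g / 2) (m : ℕ) (hm : 0 < m)
    (t v : ℕ → ℝ)
    (ht : ∀ n : ℕ, t n = th + T * (n * m + n * (n - 1) : ℝ))
    (hv : ∀ n : ℕ, v n = T * g * (m + 2 * n) / 2) :
    (∀ n : ℕ, t (n + 1) - t n = T * (m + 2 * n)) ∧
    (∀ n : ℕ, v (n + 1) = v n + T * g) ∧
    (∀ n : ℕ,
      f (t n) + v n * (t (n + 1) - t n) - g / 2 * (t (n + 1) - t n) ^ 2
        = f (t (n + 1)) ∧
      v (n + 1) = g * (t (n + 1) - t n) - v n + 2 * deriv f (t (n + 1))) ∧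
    Tendsto v atTop atTop := by
  -- derivative is periodic
  have hdper : Function.Periodic (deriv f) T := by
    intro x
    have h1 : (fun y => f (y + T)) = f := funext hfper
    calc deriv f (x + T) = deriv (fun y => f (y + T)) x := (deriv_comp_add_const f T x).symm
      _ = deriv f x := by rw [h1]
  -- each t n is th plus an integer multiple of T
  have htval : ∀ n : ℕ, ∃ k : ℤ, t n = th + (k : ℝ) * T := by
    intro n
    refine ⟨(n : ℤ) * m + n * ((n : ℤ) - 1), ?_⟩
    rw [ht n]; push_cast; ring
  have hft : ∀ n : ℕ, f (t n) = f th := by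
    intro n
    obtain ⟨k, hk⟩ := htval n
    rw [hk]
    exact (hfper.int_mul k) th
  have hdt : ∀ n : ℕ, deriv f (t n) = deriv f th := by
    intro n
    obtain ⟨k, hk⟩ := htval n
    rw [hk]
    exact (hdper.int_mul k) th
  have hΔ : ∀ n : ℕ, t (n + 1) - t n = T * (m + 2 * n) := by
    intro n
    rw [ht n, ht (n + 1)]; push_cast; ring
  refine ⟨hΔ, ?_, ?_, ?_⟩
  · intro n; rw [hv n, hv (n + 1)]; push_cast; ring
  · intro n
    constructor
    · rw [hft n, hft (n + 1), hΔ n, hv n]; ring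
    · rw [hdt (n + 1), hth, hΔ n, hv n, hv (n + 1)]; push_cast; ring
  · have : v = fun n : ℕ => T * g * m / 2 + T * g * n := by
      funext n; rw [hv n]; ring
    rw [this]
    exact tendsto_atTop_add_const_left _ _
      ((tendsto_natCast_atTop_atTop.const_mul_atTop (by positivity)))
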